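/- Let W : ℝ^d → [0,∞) be continuous and nonnegative, let s₀ > 0 and suppose F(s) = 0 for all s ≥ s₀. Let N ∈ ℕ, x₁,…,x_N ∈ ℝ^d, and c₁,…,c_N > 0 with c_i W(0) > s₀ for all i. Define the atomic measure ϱ := Σ_{i=1}^N c_i δ_{x_i}. Then (W∗ϱ)(x_i) = Σ_{j=1}^N c_j W(x_i − x_j) ≥ c_i W(0) > s₀ for each i; there exists an open set U ⊆ ℝ^d containing {x₁,…,x_N} on which W∗ϱ > s₀, hence F(W∗ϱ) = 0 on U; and consequently ϱ is a stationary distributional solution: ∫_{ℝ^d} F((W∗ϱ)(x)) Δφ(x) dϱ(x) = 0 for every φ ∈ C_c^∞(ℝ^d). -/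
import Mathlib


open MeasureTheory Set

/-- The Laplacian of a scalar function on `ℝ^d`, as a sum of second partial
derivatives. -/
noncomputable def laplacian {d : ℕ} (f : EuclideanSpace ℝ (Fin d) → ℝ)
    (x : EuclideanSpace ℝ (Fin d)) : ℝ :=
  ∑ i : Fin d, fderiv ℝ (fun y => fderiv ℝ f y (EuclideanSpace.single i 1)) x
      (EuclideanSpace.single i 1)

lemma integrable_dirac'' {α : Type*} [MeasurableSpace α] [MeasurableSingletonClass α]
    (f : α → ℝ) (a : α) : Integrable f (Measure.dirac a) := by
  have h : f =ᵐ[Measure.dirac a] fun _ => f a := by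
    rw [Filter.EventuallyEq, MeasureTheory.ae_dirac_eq]
    exact Filter.eventually_pure.2 rfl
  exact (integrable_congr h).2 (integrable_const _)

lemma conv_eval {d N : ℕ} (W : EuclideanSpace ℝ (Fin d) → ℝ)
    (x : Fin N → EuclideanSpace ℝ (Fin d)) (c : Fin N → ℝ) (hc : ∀ i, 0 < c i)
    (z : EuclideanSpace ℝ (Fin d)) :
    (∫ y, W (z - y) ∂(∑ i : Fin N, (ENNReal.ofReal (c i)) • Measure.dirac (x i)))
      = ∑ j : Fin N, c j * W (z - x j) := by
  rw [integral_finset_sum_measure (fun j _ =>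
    ((integrable_dirac'' (fun y => W (z - y)) (x j)).smul_measure ENNReal.ofReal_ne_top))]
  refine Finset.sum_congr rfl fun j _ => ?_
  rw [integral_smul_measure, integral_dirac]
  simp [ENNReal.toReal_ofReal (hc j).le]

/-- for continuous nonnegative `W`, `F ≡ 0` above `s₀`, and the atomic
measure `ϱ = Σ cᵢ δ_{xᵢ}` with `cᵢ W(0) > s₀`, the convolution `W∗ϱ` exceeds `s₀`
at each atom and on an open neighbourhood of all atoms, `F(W∗ϱ)` vanishes there,
and `ϱ` is a stationary distributional solution of `∂ϱ/∂t = Δ(F(W∗ϱ)ϱ)`. -/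
theorem atomic_measure_stationary
    (d : ℕ) (hd : 1 ≤ d)
    (W : EuclideanSpace ℝ (Fin d) → ℝ)
    (hW_cont : Continuous W) (hW_nonneg : ∀ x, 0 ≤ W x)
    (s₀ : ℝ) (hs₀ : 0 < s₀)
    (F : ℝ → ℝ) (hF : ∀ s, s₀ ≤ s → F s = 0)
    (N : ℕ) (x : Fin N → EuclideanSpace ℝ (Fin d))
    (c : Fin N → ℝ) (hc : ∀ i, 0 < c i)
    (hcW : ∀ i, s₀ < c i * W 0)
    (ϱ : Measure (EuclideanSpace ℝ (Fin d)))
    (hϱ : ϱ = ∑ i : Fin N, (ENNReal.ofReal (c i)) • Measure.dirac (x i)) :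
    (∀ i, (∫ y, W (x i - y) ∂ϱ) = ∑ j : Fin N, c j * W (x i - x j)) ∧
    (∀ i, c i * W 0 ≤ ∫ y, W (x i - y) ∂ϱ) ∧
    (∀ i, s₀ < ∫ y, W (x i - y) ∂ϱ) ∧
    (∃ U : Set (EuclideanSpace ℝ (Fin d)), IsOpen U ∧ (∀ i, x i ∈ U) ∧
      (∀ z ∈ U, s₀ < ∫ y, W (z - y) ∂ϱ) ∧
      (∀ z ∈ U, F (∫ y, W (z - y) ∂ϱ) = 0)) ∧
    (∀ φ : EuclideanSpace ℝ (Fin d) → ℝ,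
      ContDiff ℝ (⊤ : ℕ∞) φ → HasCompactSupport φ →
      (∫ z, F (∫ y, W (z - y) ∂ϱ) * laplacian φ z ∂ϱ) = 0) := by
  subst hϱ
  have hconv : ∀ z, (∫ y, W (z - y) ∂(∑ i : Fin N, (ENNReal.ofReal (c i)) • Measure.dirac (x i)))
      = ∑ j : Fin N, c j * W (z - x j) := conv_eval W x c hc
  have hge : ∀ i, c i * W 0 ≤ ∑ j : Fin N, c j * W (x i - x j) := by
    intro i
    have : c i * W 0 = c i * W (x i - x i) := by rw [sub_self]
    rw [this]
    exact Finset.single_le_sum (f := fun j => c j * W (x i - x j))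
      (fun j _ => mul_nonneg (hc j).le (hW_nonneg _)) (Finset.mem_univ i)
  have hlt : ∀ i, s₀ < ∑ j : Fin N, c j * W (x i - x j) := fun i => (hcW i).trans_le (hge i)
  have hgcont : Continuous fun z => ∑ j : Fin N, c j * W (z - x j) := by
    apply continuous_finset_sum
    intro j _
    exact continuous_const.mul (hW_cont.comp (continuous_id.sub continuous_const))
  refine ⟨fun i => hconv _, fun i => (hconv _).symm ▸ hge i, fun i => (hconv _).symm ▸ hlt i, ?_, ?_⟩
  · refine ⟨(fun z => ∑ j : Fin N, c j * W (z - x j)) ⁻¹' Ioi s₀,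
      isOpen_Ioi.preimage hgcont, fun i => hlt i, fun z hz => (hconv z).symm ▸ hz, fun z hz => ?_⟩
    rw [hconv z]
    exact hF _ (le_of_lt hz)
  · intro φ hφ hφc
    rw [integral_finset_sum_measure (fun j _ =>
      ((integrable_dirac'' _ (x j)).smul_measure ENNReal.ofReal_ne_top))]
    refine Finset.sum_eq_zero fun j _ => ?_
    rw [integral_smul_measure, integral_dirac]
    have : F (∫ y, W (x j - y) ∂(∑ i : Fin N, (ENNReal.ofReal (c i)) • Measure.dirac (x i))) = 0 := by
      rw [hconv]; exact hF _ (hlt j).le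
    simp [this]
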